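/- Let R = k[[x,y]] with k a field of characteristic p > 0, and let I = (x^3, y^3). Then x^2y^2 lies in the weak s-closure of I for 1 < s ≤ 4/3; i.e., there exists c ≠ 0 in R with c·(x^2y^2)^{p^e} ∈ I^{⌈s·p^e⌉} + I^{[p^e]} for all e ≥ 0. -/

import Mathlib

/-!
With `q = p ^ e` and `c = x²y²`, the element `c · (x²y²)^q = x^(2q+2) y^(2q+2)` is a multiple of
`(x³)^a (y³)^b ∈ I^(a+b)` whenever `3a, 3b ≤ 2q + 2`, so it lies in `I^N` for every
`N ≤ 2 ⌊(2q+2)/3⌋`. Checking the residues of `q` mod 3 gives `⌈4q/3⌉ ≤ 2 ⌊(2q+2)/3⌋`, hence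
`⌈s q⌉` is such an `N` for `s ≤ 4/3`: the element already lies in `I^⌈s q⌉`.
-/

open MvPowerSeries

/-- The `q`-th Frobenius power of an ideal: the ideal generated by `q`-th powers of
elements of `J`. -/
def frobPow {R : Type*} [CommRing R] (J : Ideal R) (q : ℕ) : Ideal R :=
  Ideal.span ((fun x => x ^ q) '' (J : Set R))

theorem MvPowerSeries.X_pow_mul_X_pow_ne_zero {σ R : Type*} [CommSemiring R] [Nontrivial R]
    (i j : σ) (m n : ℕ) : (X i ^ m * X j ^ n : MvPowerSeries σ R) ≠ 0 := by
  rw [X_pow_eq, X_pow_eq, monomial_mul_monomial, one_mul]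
  intro h
  simpa using congrArg (coeff (Finsupp.single i m + Finsupp.single j n)) h

theorem Ideal.pow_mul_pow_mem_span_pow_pair_pow {R : Type*} [CommSemiring R] (x y : R)
    {d n m N : ℕ} (hN : N ≤ n / d + m / d) :
    x ^ n * y ^ m ∈ Ideal.span {x ^ d, y ^ d} ^ N := by
  obtain ⟨a, b, rfl, ha, hb⟩ : ∃ a b, N = a + b ∧ a ≤ n / d ∧ b ≤ m / d := by
    generalize n / d = A, m / d = B at hN
    exact ⟨min A N, N - min A N, by omega, by omega, by omega⟩
  have hda : d * a ≤ n := (Nat.mul_le_mul_left d ha).trans (Nat.mul_div_le n d)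
  have hdb : d * b ≤ m := (Nat.mul_le_mul_left d hb).trans (Nat.mul_div_le m d)
  have hfactor :
      x ^ n * y ^ m = (x ^ (n - d * a) * y ^ (m - d * b)) * ((x ^ d) ^ a * (y ^ d) ^ b) := by
    rw [← pow_mul, ← pow_mul, mul_mul_mul_comm, ← pow_add, ← pow_add,
      Nat.sub_add_cancel hda, Nat.sub_add_cancel hdb]
  rw [hfactor, pow_add]
  exact Ideal.mul_mem_left _ _ (Ideal.mul_mem_mul
    (Ideal.pow_mem_pow (Ideal.subset_span (by simp)) a)
    (Ideal.pow_mem_pow (Ideal.subset_span (by simp)) b))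

theorem ceil_mul_toNat_le_of_le_four_thirds {s : ℝ} (hs : s ≤ 4 / 3) (q : ℕ) :
    ⌈s * q⌉.toNat ≤ (2 * q + 2) / 3 + (2 * q + 2) / 3 := by
  have hnat : 4 * q ≤ 6 * ((2 * q + 2) / 3) := by omega
  generalize (2 * q + 2) / 3 = M at hnat ⊢
  have hreal : (4 : ℝ) * q ≤ 6 * M := by exact_mod_cast hnat
  rw [Int.toNat_le, Int.ceil_le]
  push_cast
  nlinarith [(Nat.cast_nonneg q : (0 : ℝ) ≤ q)]

theorem x2y2_mem_weak_s_closure (k : Type*) [Field k] (p : ℕ)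
    (s : ℝ) (hs2 : s ≤ 4 / 3) :
    ∃ c : MvPowerSeries (Fin 2) k, c ≠ 0 ∧ ∀ e : ℕ,
      c * ((X 0 : MvPowerSeries (Fin 2) k) ^ 2 * X 1 ^ 2) ^ (p ^ e) ∈
        (Ideal.span {(X 0 : MvPowerSeries (Fin 2) k) ^ 3, X 1 ^ 3}) ^
            (⌈s * (p : ℝ) ^ e⌉.toNat) +
          frobPow (Ideal.span {(X 0 : MvPowerSeries (Fin 2) k) ^ 3, X 1 ^ 3}) (p ^ e) := by
  refine ⟨X 0 ^ 2 * X 1 ^ 2, X_pow_mul_X_pow_ne_zero 0 1 2 2, fun e => ?_⟩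
  have hmonomial :
      ((X 0 : MvPowerSeries (Fin 2) k) ^ 2 * X 1 ^ 2) * (X 0 ^ 2 * X 1 ^ 2) ^ (p ^ e) =
        X 0 ^ (2 * p ^ e + 2) * X 1 ^ (2 * p ^ e + 2) := by ring
  have hN := ceil_mul_toNat_le_of_le_four_thirds hs2 (p ^ e)
  rw [Nat.cast_pow] at hN
  rw [hmonomial]
  exact Submodule.mem_sup_left (Ideal.pow_mul_pow_mem_span_pow_pair_pow _ _ hN)
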